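/- arXiv:2509.02215 — 2 statements merged into one kernel-verified Lean document; each statement's English description precedes it below -/
import Mathlib

section
/- For any real numbers c < d and any function f : [c,d] → ℝ with f continuously differentiable on (c,d) and ∫_c^d (y-c)(d-y)|f'(y)|² dy < ∞, one has ∫_c^d |f(y) - (1/(d-c)) ∫_c^d f(z) dz|² dy ≤ (1/2) ∫_c^d (y-c)(d-y)|f'(y)|² dy. -/
/-!
Put `F = f - a` with `a` the mean of `f`. Expanding the square gives
`∫∫ (f x - f y)² = 2 (d - c) ∫ F²`. For `x < y`, Cauchy–Schwarz applied to `f y - f x = ∫ₓʸ f'`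
gives `(f y - f x)² ≤ (y - x) ∫ₓʸ f'²`. Integrating this over the square and exchanging the order of
integration (Tonelli in `ℝ≥0∞`, so no integrability is needed), `f'(t)²` picks up the weight
`∫∫_{x < t < y} 2 (y - x) dx dy = (d - c) (t - c) (d - t)`.
-/

open MeasureTheory Set
open scoped ENNReal

section Variance

variable {α : Type*} [MeasurableSpace α] {μ : Measure α} [IsFiniteMeasure μ] {F : α → ℝ}

theorem integral_const_sub_sq (hF : MemLp F 2 μ) (a : ℝ) :
    ∫ y, (a - F y) ^ 2 ∂μ = μ.real univ * a ^ 2 - 2 * a * ∫ y, F y ∂μ + ∫ y, F y ^ 2 ∂μ := by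
  have hF1 : Integrable F μ := hF.integrable one_le_two
  have hexp : ∀ y, (a - F y) ^ 2 = a ^ 2 - 2 * a * F y + F y ^ 2 := fun y => by ring
  have hlin : Integrable (fun y => a ^ 2 - 2 * a * F y) μ :=
    (integrable_const _).sub (hF1.const_mul _)
  simp_rw [hexp]
  rw [integral_add hlin hF.integrable_sq, integral_sub (integrable_const _) (hF1.const_mul _),
    integral_const, integral_const_mul, smul_eq_mul]

theorem integral_integral_sub_sq (hF : MemLp F 2 μ) :
    ∫ x, ∫ y, (F x - F y) ^ 2 ∂μ ∂μ =
      2 * (μ.real univ * ∫ x, F x ^ 2 ∂μ - (∫ x, F x ∂μ) ^ 2) := by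
  have hF1 : Integrable F μ := hF.integrable one_le_two
  have hlin : Integrable (fun x => μ.real univ * F x ^ 2 - 2 * F x * ∫ y, F y ∂μ) μ :=
    (hF.integrable_sq.const_mul _).sub (hF1.const_mul _ |>.mul_const _)
  simp_rw [integral_const_sub_sq hF]
  rw [integral_add hlin (integrable_const _),
    integral_sub (hF.integrable_sq.const_mul _) (hF1.const_mul _ |>.mul_const _),
    integral_const_mul, integral_mul_const, integral_const_mul, integral_const, smul_eq_mul]
  ring

theorem sq_integral_le_measureReal_mul_integral_sq (hF : MemLp F 2 μ) :
    (∫ x, F x ∂μ) ^ 2 ≤ μ.real univ * ∫ x, F x ^ 2 ∂μ := by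
  have h0 : 0 ≤ ∫ x, ∫ y, (F x - F y) ^ 2 ∂μ ∂μ :=
    integral_nonneg fun x => integral_nonneg fun y => sq_nonneg _
  linarith [integral_integral_sub_sq hF]

theorem lintegral_lintegral_ofReal_sub_sq (hF : MemLp F 2 μ) :
    ∫⁻ x, ∫⁻ y, ENNReal.ofReal ((F x - F y) ^ 2) ∂μ ∂μ =
      ENNReal.ofReal (2 * (μ.real univ * ∫ x, F x ^ 2 ∂μ - (∫ x, F x ∂μ) ^ 2)) := by
  have hF1 : Integrable F μ := hF.integrable one_le_two
  have hinner : ∀ x, Integrable (fun y => (F x - F y) ^ 2) μ := fun x =>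
    ((memLp_const (F x)).sub hF).integrable_sq
  have houter : Integrable (fun x => ∫ y, (F x - F y) ^ 2 ∂μ) μ := by
    simp_rw [integral_const_sub_sq hF]
    exact ((hF.integrable_sq.const_mul _).sub (hF1.const_mul _ |>.mul_const _)).add
      (integrable_const _)
  rw [← integral_integral_sub_sq hF, ofReal_integral_eq_lintegral_ofReal houter
    (ae_of_all _ fun x => integral_nonneg fun y => sq_nonneg _)]
  exact lintegral_congr fun x =>
    (ofReal_integral_eq_lintegral_ofReal (hinner x) (ae_of_all _ fun y => sq_nonneg _)).symm

end Variance

theorem sq_intervalIntegral_le {a b : ℝ} (hab : a ≤ b) {g : ℝ → ℝ}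
    (hg : ContinuousOn g (Icc a b)) :
    (∫ x in a..b, g x) ^ 2 ≤ (b - a) * ∫ x in a..b, g x ^ 2 := by
  have hmem : MemLp g 2 (volume.restrict (Icc a b)) :=
    (memLp_two_iff_integrable_sq (hg.aestronglyMeasurable measurableSet_Icc)).2
      (hg.pow 2).integrableOn_Icc
  have := sq_integral_le_measureReal_mul_integral_sq hmem
  rwa [measureReal_restrict_apply_univ, Real.volume_real_Icc_of_le hab,
    integral_Icc_eq_integral_Ioc, integral_Icc_eq_integral_Ioc,
    ← intervalIntegral.integral_of_le hab, ← intervalIntegral.integral_of_le hab] at this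

theorem setLIntegral_Ioo_ofReal {a b : ℝ} (hab : a ≤ b) {g : ℝ → ℝ}
    (hg : ContinuousOn g (Icc a b)) (hnn : ∀ x ∈ Ioo a b, 0 ≤ g x) :
    ∫⁻ x in Ioo a b, ENNReal.ofReal (g x) = ENNReal.ofReal (∫ x in a..b, g x) := by
  rw [intervalIntegral.integral_of_le hab, integral_Ioc_eq_integral_Ioo,
    ofReal_integral_eq_lintegral_ofReal]
  · exact hg.integrableOn_Icc.mono_set Ioo_subset_Icc_self
  · exact (ae_restrict_iff' measurableSet_Ioo).2 (ae_of_all _ hnn)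

theorem lintegral_lintegral_lintegral_swap {α β γ : Type*} [MeasurableSpace α]
    [MeasurableSpace β] [MeasurableSpace γ] {μ : Measure α} {ν : Measure β} {ρ : Measure γ}
    [SFinite μ] [SFinite ν] [SFinite ρ] {H : α → β → γ → ℝ≥0∞}
    (hH : Measurable fun p : (α × β) × γ => H p.1.1 p.1.2 p.2) :
    ∫⁻ x, ∫⁻ y, ∫⁻ z, H x y z ∂ρ ∂ν ∂μ = ∫⁻ z, ∫⁻ x, ∫⁻ y, H x y z ∂ν ∂μ ∂ρ := by
  calc ∫⁻ x, ∫⁻ y, ∫⁻ z, H x y z ∂ρ ∂ν ∂μ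
      = ∫⁻ p, ∫⁻ z, H p.1 p.2 z ∂ρ ∂μ.prod ν :=
        (lintegral_prod _ hH.lintegral_prod_right'.aemeasurable).symm
    _ = ∫⁻ z, ∫⁻ p, H p.1 p.2 z ∂μ.prod ν ∂ρ := lintegral_lintegral_swap hH.aemeasurable
    _ = ∫⁻ z, ∫⁻ x, ∫⁻ y, H x y z ∂ν ∂μ ∂ρ :=
        lintegral_congr fun z =>
          lintegral_prod _ (hH.comp (measurable_id.prodMk measurable_const)).aemeasurable

section ChordKernel

noncomputable def chordKernel (x y t : ℝ) : ℝ≥0∞ :=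
  (Ioo x y).indicator (fun _ => ENNReal.ofReal (y - x)) t

theorem measurable_chordKernel :
    Measurable fun p : (ℝ × ℝ) × ℝ => chordKernel p.1.1 p.1.2 p.2 := by
  change Measurable ({p : (ℝ × ℝ) × ℝ | p.1.1 < p.2 ∧ p.2 < p.1.2}.indicator
    fun p => ENNReal.ofReal (p.1.2 - p.1.1))
  exact (by fun_prop : Measurable fun p : (ℝ × ℝ) × ℝ => ENNReal.ofReal (p.1.2 - p.1.1)).indicator
    ((measurableSet_lt measurable_fst.fst measurable_snd).inter
      (measurableSet_lt measurable_snd measurable_fst.snd))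

theorem chordKernel_eq_zero_of_le {x y : ℝ} (hxy : x ≤ y) (t : ℝ) : chordKernel y x t = 0 := by
  rw [chordKernel, Ioo_eq_empty (not_lt.2 hxy), indicator_empty]

variable {c d t : ℝ}

theorem lintegral_lintegral_chordKernel (ht : t ∈ Ioo c d) :
    ∫⁻ x in Ioo c d, ∫⁻ y in Ioo c d, chordKernel x y t =
      ENNReal.ofReal ((t - c) * (d - t) * (d - c) / 2) := by
  have hinner : ∀ x, ∫⁻ y in Ioo c d, chordKernel x y t =
      (Iio t).indicator (fun x => ENNReal.ofReal ((d - t) * ((d + t) / 2 - x))) x := by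
    intro x
    by_cases hx : x < t
    · have hIoi : ∀ y, chordKernel x y t = (Ioi t).indicator (fun y => ENNReal.ofReal (y - x)) y :=
        fun y => by by_cases hy : t < y <;> simp [chordKernel, indicator, hx, hy]
      simp_rw [hIoi, indicator_of_mem (mem_Iio.2 hx)]
      rw [lintegral_indicator measurableSet_Ioi, Measure.restrict_restrict measurableSet_Ioi,
        Ioi_inter_Ioo, max_eq_left ht.1.le, setLIntegral_Ioo_ofReal ht.2.le (by fun_prop)
          (fun y hy => by linarith [hy.1])]
      congr 1
      simp only [intervalIntegral.integral_sub, intervalIntegral.intervalIntegrable_id,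
        intervalIntegrable_const, integral_id, intervalIntegral.integral_const, smul_eq_mul]
      ring
    · simp [chordKernel, indicator, hx]
  simp_rw [hinner]
  rw [lintegral_indicator measurableSet_Iio, Measure.restrict_restrict measurableSet_Iio,
    Iio_inter_Ioo, min_eq_left ht.2.le, setLIntegral_Ioo_ofReal ht.1.le (by fun_prop)
      (fun x hx => by nlinarith [hx.2, ht.2])]
  congr 1
  rw [intervalIntegral.integral_const_mul, intervalIntegral.integral_sub (g := fun x => x)
    (continuous_const.intervalIntegrable _ _) (continuous_id.intervalIntegrable _ _)]
  simp only [intervalIntegral.integral_div, intervalIntegral.integral_add, intervalIntegrable_const,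
    intervalIntegral.integral_const, smul_eq_mul, integral_id]
  ring

theorem lintegral_lintegral_chordKernel_add_swap (ht : t ∈ Ioo c d) :
    ∫⁻ x in Ioo c d, ∫⁻ y in Ioo c d, (chordKernel x y t + chordKernel y x t) =
      ENNReal.ofReal ((t - c) * (d - t) * (d - c)) := by
  have hw : 0 ≤ (t - c) * (d - t) * (d - c) / 2 := by
    have := mul_pos (mul_pos (sub_pos.2 ht.1) (sub_pos.2 ht.2)) (sub_pos.2 (ht.1.trans ht.2))
    linarith
  have hk : Measurable fun p : ℝ × ℝ => chordKernel p.1 p.2 t :=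
    measurable_chordKernel.comp (measurable_id.prodMk measurable_const)
  have hswap : ∫⁻ x in Ioo c d, ∫⁻ y in Ioo c d, chordKernel y x t =
      ∫⁻ x in Ioo c d, ∫⁻ y in Ioo c d, chordKernel x y t :=
    lintegral_lintegral_swap (hk.comp measurable_swap).aemeasurable
  have hk' : ∀ x, Measurable fun y => chordKernel x y t := fun x =>
    hk.comp (measurable_const.prodMk measurable_id)
  simp_rw [lintegral_add_left (hk' _)]
  rw [lintegral_add_left hk.lintegral_prod_right', hswap, lintegral_lintegral_chordKernel ht,
    ← ENNReal.ofReal_add hw hw]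
  ring_nf

end ChordKernel

theorem sq_sub_le_mul_intervalIntegral_deriv_sq {f : ℝ → ℝ} {s : Set ℝ} (hf : ContDiffOn ℝ 1 f s)
    (hs : IsOpen s) {x y : ℝ} (hxy : x ≤ y) (hsub : Icc x y ⊆ s) :
    (f y - f x) ^ 2 ≤ (y - x) * ∫ t in x..y, deriv f t ^ 2 := by
  have hcont : ContinuousOn (deriv f) (Icc x y) :=
    (hf.continuousOn_deriv_of_isOpen hs le_rfl).mono hsub
  have hderiv : ∀ t ∈ uIcc x y, HasDerivAt f (deriv f t) t := fun t ht =>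
    ((hf.differentiableOn one_ne_zero t (hsub (uIcc_of_le hxy ▸ ht))).differentiableAt
      (hs.mem_nhds (hsub (uIcc_of_le hxy ▸ ht)))).hasDerivAt
  rw [← intervalIntegral.integral_eq_sub_of_hasDerivAt hderiv (hcont.intervalIntegrable_of_Icc hxy)]
  exact sq_intervalIntegral_le hxy hcont

section Interval

variable {f : ℝ → ℝ} {c d : ℝ}

theorem ofReal_sq_sub_le_lintegral_chordKernel (hf : ContDiffOn ℝ 1 f (Ioo c d)) {x y : ℝ}
    (hx : x ∈ Ioo c d) (hy : y ∈ Ioo c d) :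
    ENNReal.ofReal ((f x - f y) ^ 2) ≤ ∫⁻ t in Ioo c d,
      ENNReal.ofReal (deriv f t ^ 2) * (chordKernel x y t + chordKernel y x t) := by
  wlog hxy : x ≤ y generalizing x y
  · simpa only [← neg_sub (f x), neg_sq, add_comm] using this hy hx (le_of_not_ge hxy)
  have hsub : Icc x y ⊆ Ioo c d := Icc_subset_Ioo hx.1 hy.2
  have hcont : ContinuousOn (fun t => deriv f t ^ 2) (Icc x y) :=
    ((hf.continuousOn_deriv_of_isOpen isOpen_Ioo le_rfl).mono hsub).pow 2
  have hkernel : ∀ t, ENNReal.ofReal (deriv f t ^ 2) * (chordKernel x y t + chordKernel y x t) =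
      (Ioo x y).indicator (fun t => ENNReal.ofReal ((y - x) * deriv f t ^ 2)) t := fun t => by
    rw [chordKernel_eq_zero_of_le hxy, add_zero, chordKernel]
    by_cases ht : t ∈ Ioo x y
    · rw [indicator_of_mem ht, indicator_of_mem ht, ENNReal.ofReal_mul (sub_nonneg.2 hxy), mul_comm]
    · rw [indicator_of_notMem ht, indicator_of_notMem ht, mul_zero]
  simp_rw [hkernel]
  rw [lintegral_indicator measurableSet_Ioo, Measure.restrict_restrict measurableSet_Ioo,
    inter_eq_left.2 (Ioo_subset_Icc_self.trans hsub),
    setLIntegral_Ioo_ofReal (g := fun t => (y - x) * deriv f t ^ 2) hxy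
      (continuousOn_const.mul hcont) fun t _ => mul_nonneg (sub_nonneg.2 hxy) (sq_nonneg _),
    intervalIntegral.integral_const_mul, ← neg_sub, neg_sq]
  exact ENNReal.ofReal_le_ofReal (sq_sub_le_mul_intervalIntegral_deriv_sq hf isOpen_Ioo hxy hsub)

theorem lintegral_lintegral_ofReal_sq_sub_le (hf : ContDiffOn ℝ 1 f (Ioo c d)) :
    ∫⁻ x in Ioo c d, ∫⁻ y in Ioo c d, ENNReal.ofReal ((f x - f y) ^ 2) ≤
      ENNReal.ofReal (d - c) *
        ∫⁻ t in Ioo c d, ENNReal.ofReal ((t - c) * (d - t) * deriv f t ^ 2) := by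
  have hmeas : Measurable fun p : (ℝ × ℝ) × ℝ => ENNReal.ofReal (deriv f p.2 ^ 2) *
      (chordKernel p.1.1 p.1.2 p.2 + chordKernel p.1.2 p.1.1 p.2) :=
    ((measurable_deriv f).comp measurable_snd |>.pow_const 2).ennreal_ofReal.mul
      (measurable_chordKernel.add (measurable_chordKernel.comp
        ((measurable_fst.snd.prodMk measurable_fst.fst).prodMk measurable_snd)))
  calc ∫⁻ x in Ioo c d, ∫⁻ y in Ioo c d, ENNReal.ofReal ((f x - f y) ^ 2)
      ≤ ∫⁻ x in Ioo c d, ∫⁻ y in Ioo c d, ∫⁻ t in Ioo c d,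
          ENNReal.ofReal (deriv f t ^ 2) * (chordKernel x y t + chordKernel y x t) :=
        setLIntegral_mono' measurableSet_Ioo fun x hx =>
          setLIntegral_mono' measurableSet_Ioo fun y hy =>
            ofReal_sq_sub_le_lintegral_chordKernel hf hx hy
    _ = ∫⁻ t in Ioo c d, ∫⁻ x in Ioo c d, ∫⁻ y in Ioo c d,
          ENNReal.ofReal (deriv f t ^ 2) * (chordKernel x y t + chordKernel y x t) :=
        lintegral_lintegral_lintegral_swap hmeas
    _ = ∫⁻ t in Ioo c d,
          ENNReal.ofReal (d - c) * ENNReal.ofReal ((t - c) * (d - t) * deriv f t ^ 2) := by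
        refine setLIntegral_congr_fun measurableSet_Ioo fun t ht => ?_
        simp_rw [lintegral_const_mul' _ _ ENNReal.ofReal_ne_top]
        rw [lintegral_lintegral_chordKernel_add_swap ht, ← ENNReal.ofReal_mul (sq_nonneg _),
          ← ENNReal.ofReal_mul (sub_nonneg.2 (ht.1.trans ht.2).le)]
        ring_nf
    _ = _ := lintegral_const_mul' _ _ ENNReal.ofReal_ne_top

theorem sub_mul_sub_mul_sq_nonneg {t : ℝ} (ht : t ∈ Ioo c d) (v : ℝ) :
    0 ≤ (t - c) * (d - t) * v ^ 2 :=
  mul_nonneg (mul_nonneg (sub_nonneg.2 ht.1.le) (sub_nonneg.2 ht.2.le)) (sq_nonneg v)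

theorem setIntegral_Ioo_sq_sub_le (hcd : c < d) (hf : ContDiffOn ℝ 1 f (Ioo c d)) {a : ℝ}
    (hF : MemLp (fun y => f y - a) 2 (volume.restrict (Ioo c d)))
    (hmean : ∫ y in Ioo c d, (f y - a) = 0)
    (hint : IntegrableOn (fun t => (t - c) * (d - t) * deriv f t ^ 2) (Ioo c d)) :
    ∫ y in Ioo c d, (f y - a) ^ 2 ≤ 1 / 2 * ∫ t in Ioo c d, (t - c) * (d - t) * deriv f t ^ 2 := by
  have hw : ∀ t ∈ Ioo c d, 0 ≤ (t - c) * (d - t) * deriv f t ^ 2 := fun t ht =>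
    sub_mul_sub_mul_sq_nonneg ht _
  have hbound := lintegral_lintegral_ofReal_sq_sub_le hf
  have hvar := lintegral_lintegral_ofReal_sub_sq hF
  simp_rw [sub_sub_sub_cancel_right, hmean, measureReal_restrict_apply_univ,
    Real.volume_real_Ioo_of_le hcd.le] at hvar
  rw [hvar, ← ofReal_integral_eq_lintegral_ofReal hint
      ((ae_restrict_iff' measurableSet_Ioo).2 (ae_of_all _ hw)),
    ← ENNReal.ofReal_mul (sub_pos.2 hcd).le, ENNReal.ofReal_le_ofReal_iff
      (mul_nonneg (sub_pos.2 hcd).le (setIntegral_nonneg measurableSet_Ioo hw))] at hbound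
  nlinarith

end Interval

/-- Poincaré-type inequality on a compact interval with optimal constant 1/2. -/
theorem poincare_type_inequality (c d : ℝ) (hcd : c < d) (f : ℝ → ℝ)
    (hf : ContDiffOn ℝ 1 f (Set.Ioo c d))
    (hint : IntervalIntegrable (fun y => (y - c) * (d - y) * |deriv f y| ^ 2) volume c d) :
    (∫ y in c..d, |f y - (1 / (d - c)) * ∫ z in c..d, f z| ^ 2) ≤
      (1 / 2) * ∫ y in c..d, (y - c) * (d - y) * |deriv f y| ^ 2 := by
  set a := (1 / (d - c)) * ∫ z in c..d, f z with ha
  simp_rw [sq_abs, intervalIntegral.integral_of_le hcd.le, integral_Ioc_eq_integral_Ioo] at hint ⊢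
  rw [intervalIntegrable_iff_integrableOn_Ioo_of_le hcd.le] at hint
  by_cases hL : IntegrableOn (fun y => (f y - a) ^ 2) (Ioo c d)
  swap
  · rw [integral_undef hL]
    exact mul_nonneg one_half_pos.le
      (setIntegral_nonneg measurableSet_Ioo fun t ht => sub_mul_sub_mul_sq_nonneg ht _)
  have hF : MemLp (fun y => f y - a) 2 (volume.restrict (Ioo c d)) :=
    (memLp_two_iff_integrable_sq ((hf.continuousOn.sub continuousOn_const).aestronglyMeasurable
      measurableSet_Ioo)).2 hL
  have hfi : IntegrableOn f (Ioo c d) := by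
    simpa only [sub_add_cancel, IntegrableOn] using
      (hF.integrable one_le_two).fun_add (integrable_const a)
  refine setIntegral_Ioo_sq_sub_le hcd hf hF ?_ hint
  rw [integral_sub hfi (integrable_const a), integral_const, smul_eq_mul,
    measureReal_restrict_apply_univ, Real.volume_real_Ioo_of_le hcd.le, ha,
    ← integral_Ioc_eq_integral_Ioo, ← intervalIntegral.integral_of_le hcd.le]
  field_simp [(sub_pos.2 hcd).ne']
  ring
end

section
/- Let R > 0, γ > 1 and define, for ρ > 0 and θ > 0, the entropy s(ρ,θ) = -R ln ρ + (R/(γ-1)) ln θ and mathematical entropy η(ρ,u,θ) = -ρ s(ρ,θ). Then for any two states (ρ,u,θ) and (ρ̄,ū,θ̄) with all densities and temperatures positive, the θ̄-weighted relative entropy in the conserved variables U = (ρ, ρu, ρ(e + u²/2)) with e = (R/(γ-1))θ satisfies θ̄·η(U|Ū) = ρ[ Rθ̄·Φ(ρ̄/ρ) + (R/(γ-1))θ̄·Φ(θ/θ̄) + (1/2)(u-ū)² ], where Φ(z) = z - ln z - 1 and η(U|Ū) := η(U) - η(Ū) - ∇_U η(Ū)·(U-Ū). -/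
/-- The θ̄-weighted relative entropy identity for the ideal polytropic gas. -/
theorem weighted_relative_entropy_identity (R γ : ℝ) (hR : 0 < R) (hγ : 1 < γ)
    (ρ u θ ρb ub θb : ℝ) (hρ : 0 < ρ) (hθ : 0 < θ) (hρb : 0 < ρb) (hθb : 0 < θb) :
    let s : ℝ → ℝ → ℝ := fun r t => -R * Real.log r + (R / (γ - 1)) * Real.log t
    let η : ℝ → ℝ → ℝ := fun r t => -(r * s r t)
    let Φ : ℝ → ℝ := fun z => z - Real.log z - 1
    let m := ρ * u
    let mb := ρb * ub
    let E := ρ * ((R / (γ - 1)) * θ + u ^ 2 / 2)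
    let Eb := ρb * ((R / (γ - 1)) * θb + ub ^ 2 / 2)
    -- θ̄·η(U|Ū) = θ̄(η(U) − η(Ū)) − θ̄∇_U η(Ū)·(U − Ū), with
    -- θ̄∇_U η(Ū) = (−θ̄ s(Ū) + Rθ̄ + (R/(γ−1))θ̄ − ū²/2, ū, −1)
    θb * (η ρ θ - η ρb θb)
      - ((-θb * s ρb θb + R * θb + (R / (γ - 1)) * θb - ub ^ 2 / 2) * (ρ - ρb)
          + ub * (m - mb) + (-1) * (E - Eb))
    = ρ * (R * θb * Φ (ρb / ρ) + (R / (γ - 1)) * θb * Φ (θ / θb)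
        + (1 / 2) * (u - ub) ^ 2) := by
  intro s η Φ m mb E Eb
  simp only [s, η, Φ, m, mb, E, Eb]
  rw [Real.log_div hρb.ne' hρ.ne', Real.log_div hθ.ne' hθb.ne']
  have h1 : ρb / ρ = ρb * ρ⁻¹ := div_eq_mul_inv _ _
  have h2 : θ / θb = θ * θb⁻¹ := div_eq_mul_inv _ _
  rw [h1, h2]
  have hρi : ρ * ρ⁻¹ = 1 := mul_inv_cancel₀ hρ.ne'
  have hθi : θb * θb⁻¹ = 1 := mul_inv_cancel₀ hθb.ne'
  generalize R / (γ - 1) = c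
  linear_combination (-(R*θb*ρb))*hρi + (-(ρ*c*θ))*hθi
end
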